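/- Let ρ be an ordinal, a ∈ X, m : ℕ → ℕ strictly increasing, and y : ℕ → X a sequence with d (y n) a = ω^ρ · (m n) for all n ∈ ℕ. Then there exists a sequence w : ℕ → X such that (i) w is not ρ-limitedly distant from the constant sequence at a, and (ii) for every μ ∈ ℕ, {n : d (w n) a ♯ ω^ρ · μ ≤ d (y n) a} ∈ F. (This is the 'closer galaxy' construction in the proof of Theorem 5.1: the ρ-galaxy of [w] is different from the principal ρ-galaxy and closer to it than the ρ-galaxy of [y].) -/

import Mathlib

open Filter Ordinal
open scoped Ordinal

universe u

/-- Natural (Hessenberg) sum of ordinals, as `Ordinal.nadd` was defined in Mathlib (Dec 2024). -/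
noncomputable def Ordinal.nadd : Ordinal.{u} → Ordinal.{u} → Ordinal.{u}
  | a, b =>
    max (blsub.{u, u} a fun a' _ => Ordinal.nadd a' b) (blsub.{u, u} b fun b' _ => Ordinal.nadd a b')
termination_by o₁ o₂ => (o₁, o₂)

infixl:65 " ♯ " => Ordinal.nadd

/-- Sequences `x, y : ℕ → X` are `ρ`-limitedly distant if there exists `μ ∈ ℕ` with
`{n : d (x n) (y n) ≤ ω^ρ · μ} ∈ F`. -/
def LimitedlyDistant {X : Type*} (d : X → X → Ordinal) (F : Ultrafilter ℕ)
    (ρ : Ordinal) (x y : ℕ → X) : Prop :=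
  ∃ μ : ℕ, {n : ℕ | d (x n) (y n) ≤ ω ^ ρ * μ} ∈ F

/-!
Take `w n = y (n / 2)`. Then `d (w n) a = ω ^ ρ * m (n / 2)` with `m (n / 2) ≥ n / 2`, which
eventually exceeds every `ω ^ ρ * μ`; and for `n ≥ 2 μ` we have `m (n / 2) + μ ≤ m n`, so (ii)
reduces to `ω ^ ρ * k ♯ ω ^ ρ * l ≤ ω ^ ρ * (k + l)`.

Every ordinal below `P * ω` is `P * i + t` with `i : ℕ`, `t < P`, and these are ordered
lexicographically in `(i, t)`. Hence, if `P` is closed under `♯`, the recursive definition of `♯`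
gives `(P * i + t) ♯ (P * j + u) ≤ P * (i + j) + (t ♯ u)`. Applied to `P = ω ^ e` for the
logarithms `e < ρ`, the same bound shows by induction on `ρ` that `ω ^ ρ` is closed under `♯`.
-/

namespace Ordinal

theorem nadd_def (a b : Ordinal.{u}) :
    a ♯ b = max (blsub.{u, u} a fun a' _ => a' ♯ b) (blsub.{u, u} b fun b' _ => a ♯ b') := by
  rw [Ordinal.nadd]

theorem lt_nadd_iff {a b c : Ordinal.{u}} :
    a < b ♯ c ↔ (∃ b' < b, a ≤ b' ♯ c) ∨ ∃ c' < c, a ≤ b ♯ c' := by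
  simp [nadd_def b c, lt_blsub_iff]

theorem nadd_le_iff {a b c : Ordinal.{u}} :
    b ♯ c ≤ a ↔ (∀ b' < b, b' ♯ c < a) ∧ ∀ c' < c, b ♯ c' < a := by
  simp [nadd_def b c, blsub_le_iff]

theorem nadd_lt_nadd_left {b c : Ordinal.{u}} (h : b < c) (a : Ordinal.{u}) : a ♯ b < a ♯ c :=
  lt_nadd_iff.2 (Or.inr ⟨b, h, le_rfl⟩)

theorem nadd_lt_nadd_right {b c : Ordinal.{u}} (h : b < c) (a : Ordinal.{u}) : b ♯ a < c ♯ a :=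
  lt_nadd_iff.2 (Or.inl ⟨b, h, le_rfl⟩)

theorem nadd_comm (a b : Ordinal.{u}) : a ♯ b = b ♯ a := by
  induction a using WellFoundedLT.induction generalizing b with
  | ind a IHa =>
    induction b using WellFoundedLT.induction with
    | ind b IHb =>
      rw [nadd_def a b, nadd_def b a, max_comm]
      congr 1
      · congr; funext b' hb'; exact IHb b' hb'
      · congr; funext a' ha'; exact IHa a' ha' b

@[simp]
theorem nadd_zero (a : Ordinal.{u}) : a ♯ 0 = a := by
  induction a using WellFoundedLT.induction with
  | ind a IH =>
    refine le_antisymm (nadd_le_iff.2 ⟨fun a' ha' => by rwa [IH a' ha'], by simp⟩) ?_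
    refine le_of_forall_lt fun a' ha' => ?_
    simpa [IH a' ha'] using nadd_lt_nadd_right ha' 0

theorem exists_nat_mul_add_of_lt_mul_omega0 {P r : Ordinal} (h : r < P * ω) :
    ∃ (i : ℕ) (t : Ordinal), t < P ∧ r = P * i + t := by
  have hP : P ≠ 0 := by rintro rfl; simp at h
  obtain ⟨i, hi⟩ := lt_omega0.1 ((lt_mul_iff_div_lt hP).1 h)
  exact ⟨i, r % P, mod_lt r hP, by rw [← hi, div_add_mod]⟩

theorem lex_lt_of_mul_add_lt_mul_add {P t t' : Ordinal} {i i' : ℕ} (ht : t < P)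
    (h : P * i' + t' < P * i + t) : i' < i ∨ i' = i ∧ t' < t := by
  rcases lt_trichotomy i' i with hi | rfl | hi
  · exact Or.inl hi
  · exact Or.inr ⟨rfl, lt_of_add_lt_add_left h⟩
  · refine absurd h (not_lt.2 ?_)
    calc P * i + t ≤ P * ↑(i + 1) := by
          rw [Nat.cast_succ, mul_add_one]; exact (add_lt_add_right ht _).le
      _ ≤ P * i' := mul_le_mul_right (by exact_mod_cast hi) _
      _ ≤ P * i' + t' := le_self_add

theorem exists_mul_add_lex_of_lt_mul_add {P x t : Ordinal} {i : ℕ} (ht : t < P)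
    (hx : x < P * i + t) :
    ∃ (i' : ℕ) (t' : Ordinal), t' < P ∧ x = P * i' + t' ∧ (i' < i ∨ i' = i ∧ t' < t) := by
  have hxω : x < P * ω := calc
    x < P * i + t := hx
    _ < P * ↑(i + 1) := by rw [Nat.cast_succ, mul_add_one]; exact add_lt_add_right ht _
    _ ≤ P * ω := mul_le_mul_right (nat_lt_omega0 _).le _
  obtain ⟨i', t', ht', rfl⟩ := exists_nat_mul_add_of_lt_mul_omega0 hxω
  exact ⟨i', t', ht', rfl, lex_lt_of_mul_add_lt_mul_add ht hx⟩

theorem mul_add_nadd_lt_mul_add_nadd_of_lex {P : Ordinal} (hP : IsPrincipal (· ♯ ·) P)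
    {i i' j : ℕ} {t t' u : Ordinal} (ht' : t' < P) (hu : u < P) (h : i' < i ∨ i' = i ∧ t' < t) :
    P * ↑(i' + j) + (t' ♯ u) < P * ↑(i + j) + (t ♯ u) := by
  rcases h with hi | ⟨rfl, ht⟩
  · calc P * ↑(i' + j) + (t' ♯ u) < P * ↑(i' + j) + P := add_lt_add_right (hP ht' hu) _
      _ = P * ↑(i' + j + 1) := by rw [Nat.cast_succ, mul_add_one]
      _ ≤ P * ↑(i + j) := mul_le_mul_right (by exact_mod_cast (by omega : i' + j + 1 ≤ i + j)) _
      _ ≤ P * ↑(i + j) + (t ♯ u) := le_self_add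
  · exact add_lt_add_right (nadd_lt_nadd_right ht u) _

theorem mul_add_nadd_mul_add_le {P : Ordinal} (hP : IsPrincipal (· ♯ ·) P) (i j : ℕ)
    {t u : Ordinal} (ht : t < P) (hu : u < P) :
    (P * i + t) ♯ (P * j + u) ≤ P * ↑(i + j) + (t ♯ u) := by
  obtain ⟨o, ho⟩ : ∃ o, (P * i + t) ♯ (P * j + u) = o := ⟨_, rfl⟩
  induction o using WellFoundedLT.induction generalizing i j t u with
  | ind o IH =>
    refine nadd_le_iff.2 ⟨fun x hx => ?_, fun y hy => ?_⟩
    · obtain ⟨i', t', ht', rfl, hlex⟩ := exists_mul_add_lex_of_lt_mul_add ht hx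
      exact (IH _ (ho ▸ nadd_lt_nadd_right hx _) i' j ht' hu rfl).trans_lt
        (mul_add_nadd_lt_mul_add_nadd_of_lex hP ht' hu hlex)
    · obtain ⟨j', u', hu', rfl, hlex⟩ := exists_mul_add_lex_of_lt_mul_add hu hy
      refine (IH _ (ho ▸ nadd_lt_nadd_left hy _) i j' ht hu' rfl).trans_lt ?_
      rw [add_comm i, add_comm i, nadd_comm t, nadd_comm t]
      exact mul_add_nadd_lt_mul_add_nadd_of_lex hP hu' ht hlex

theorem isPrincipal_nadd_omega0_opow (ρ : Ordinal) : IsPrincipal (· ♯ ·) (ω ^ ρ) := by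
  induction ρ using WellFoundedLT.induction with
  | ind ρ IH =>
    intro r s hr hs
    rcases eq_or_ne ρ 0 with rfl | hρ
    · simp_all
    obtain ⟨e, he, hre, hse⟩ : ∃ e < ρ, r < ω ^ e * ω ∧ s < ω ^ e * ω := by
      refine ⟨max (log ω r) (log ω s), max_lt (lt_log_of_lt_opow hρ hr) (lt_log_of_lt_opow hρ hs),
        ?_, ?_⟩ <;>
      · rw [← opow_succ]
        exact (lt_opow_succ_log_self one_lt_omega0 _).trans_le
          (opow_le_opow_right omega0_pos (Order.succ_le_succ (by simp)))
    obtain ⟨i, t, ht, rfl⟩ := exists_nat_mul_add_of_lt_mul_omega0 hre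
    obtain ⟨j, u, hu, rfl⟩ := exists_nat_mul_add_of_lt_mul_omega0 hse
    calc (ω ^ e * i + t) ♯ (ω ^ e * j + u) ≤ ω ^ e * ↑(i + j) + (t ♯ u) :=
          mul_add_nadd_mul_add_le (IH e he) i j ht hu
      _ < ω ^ e * ↑(i + j) + ω ^ e := add_lt_add_right (IH e he ht hu) _
      _ = ω ^ e * ↑(i + j + 1) := by rw [Nat.cast_succ, mul_add_one]
      _ < ω ^ e * ω := (mul_lt_mul_iff_right₀ (opow_pos e omega0_pos)).2 (nat_lt_omega0 _)
      _ ≤ ω ^ ρ := by rw [← opow_succ]; exact opow_le_opow_right omega0_pos (Order.succ_le_of_lt he)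

theorem omega0_opow_mul_nadd_le (ρ : Ordinal) (k l : ℕ) :
    ω ^ ρ * k ♯ ω ^ ρ * l ≤ ω ^ ρ * ↑(k + l) := by
  simpa using mul_add_nadd_mul_add_le (isPrincipal_nadd_omega0_opow ρ) k l
    (opow_pos ρ omega0_pos) (opow_pos ρ omega0_pos)

end Ordinal

theorem exists_closer_galaxy_general
    (X : Type*) (d : X → X → Ordinal)
    (F : Ultrafilter ℕ) (hF : ∀ s : Set ℕ, sᶜ.Finite → s ∈ F)
    (ρ : Ordinal) (a : X) (m : ℕ → ℕ) (hm : StrictMono m)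
    (y : ℕ → X) (hy : ∀ n : ℕ, d (y n) a = ω ^ ρ * (m n)) :
    ∃ w : ℕ → X,
      ¬ LimitedlyDistant d F ρ w (fun _ => a) ∧
      ∀ μ : ℕ, {n : ℕ | d (w n) a ♯ ω ^ ρ * μ ≤ d (y n) a} ∈ F := by
  have hF_le : (F : Filter ℕ) ≤ atTop := Nat.cofinite_eq_atTop ▸ fun s hs => hF s hs
  refine ⟨fun n => y (n / 2), ?_, fun μ => ?_⟩
  · rintro ⟨μ, hnear⟩
    have hfar : ∀ᶠ n in F, ω ^ ρ * μ < d (y (n / 2)) a := by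
      refine hF_le ((eventually_ge_atTop (2 * μ + 2)).mono fun n hn => ?_)
      have : n / 2 ≤ m (n / 2) := hm.le_apply
      rw [hy, mul_lt_mul_iff_right₀ (opow_pos ρ omega0_pos)]
      exact_mod_cast (by omega : μ < m (n / 2))
    obtain ⟨n, hle, hlt⟩ := (Filter.Eventually.and hnear hfar).exists
    exact (hle.trans_lt hlt).false
  · filter_upwards [hF_le (eventually_ge_atTop (2 * μ))] with n hn
    have hmn : m (n / 2) + μ ≤ m n := calc
      m (n / 2) + μ ≤ m (μ + n / 2) := by rw [add_comm]; exact hm.add_le_nat μ _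
      _ ≤ m n := hm.monotone (by omega)
    rw [hy, hy]
    exact (omega0_opow_mul_nadd_le ρ _ _).trans (mul_le_mul_right (by exact_mod_cast hmn) _)

theorem exists_closer_galaxy
    (X : Type*) (d : X → X → Ordinal)
    (hd0 : ∀ a b : X, d a b = 0 ↔ a = b)
    (hdsymm : ∀ a b : X, d a b = d b a)
    (hdtri : ∀ a b c : X, d a c ≤ d a b ♯ d b c)
    (F : Ultrafilter ℕ) (hF : ∀ s : Set ℕ, sᶜ.Finite → s ∈ F)
    (ρ : Ordinal) (a : X) (m : ℕ → ℕ) (hm : StrictMono m)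
    (y : ℕ → X) (hy : ∀ n : ℕ, d (y n) a = ω ^ ρ * (m n)) :
    ∃ w : ℕ → X,
      ¬ LimitedlyDistant d F ρ w (fun _ => a) ∧
      ∀ μ : ℕ, {n : ℕ | d (w n) a ♯ ω ^ ρ * μ ≤ d (y n) a} ∈ F :=
  exists_closer_galaxy_general X d F hF ρ a m hm y hy
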